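/- arXiv:2507.01907 — 2 statements merged into one kernel-verified Lean document; each statement's English description precedes it below -/
import Mathlib

section
/- Let X be a separable metric space and μ a Borel probability measure on X. Then the set G of sequences (x_i)_{i∈ℕ} in X that are generic for μ — i.e. whose empirical measures converge narrowly to μ — has full measure under the countable product measure μ^⊗ℕ on the sequence space X^ℕ. -/
open MeasureTheory Filter Topology
open scoped BoundedContinuousFunction

/-- A sequence `x : ℕ → X` is *generic* for a Borel probability measure `μ` if its empirical
measures `μ_n = (1/n)(δ_{x 0} + … + δ_{x (n-1)})` converge narrowly to `μ`, i.e. the averages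
of every bounded continuous function along the sequence converge to its `μ`-integral. -/
def Generic {X : Type*} [TopologicalSpace X] [MeasurableSpace X]
    (μ : Measure X) (x : ℕ → X) : Prop :=
  ∀ φ : X →ᵇ ℝ,
    Tendsto (fun n : ℕ => (∑ i ∈ Finset.range n, φ (x i)) / (n : ℝ))
      atTop (𝓝 (∫ a, φ a ∂μ))

/-!
By the strong law of large numbers, applied to the i.i.d. coordinates of `μ^⊗ℕ`, almost every
sequence has empirical frequencies converging to `μ U` simultaneously for all `U` in a countable
family: the finite unions of a countable basis. Every open set is a countable directed union of
such sets, so the empirical measures satisfy `μ G ≤ liminf μₙ G` for all open `G`, and the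
portmanteau theorem turns this into narrow convergence.
-/

open ProbabilityTheory Finset TopologicalSpace
open scoped ENNReal

namespace MeasureTheory

theorem Measure.eq_infinitePi_of_map_fin {X : ℕ → Type*} [∀ i, MeasurableSpace (X i)]
    (μ : ∀ i, Measure (X i)) [∀ i, IsProbabilityMeasure (μ i)] {P : Measure (∀ i, X i)}
    (hP : ∀ n, P.map (fun x (i : Fin n) => x i) = Measure.pi fun i : Fin n => μ i) :
    P = infinitePi μ := by
  classical
  refine eq_infinitePi μ fun s t ht => ?_
  -- pad the box over `s` with `univ` to a box over some `Fin n`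
  obtain ⟨n, hsn⟩ : ∃ n, s ⊆ range n := ⟨s.sup id + 1, fun i hi =>
    mem_range.2 (Nat.lt_succ_of_le (le_sup (f := id) hi))⟩
  let t' : ∀ i : Fin n, Set (X i) := fun i => if (i : ℕ) ∈ s then t i else Set.univ
  have hpre : (fun x (i : Fin n) => x i) ⁻¹' Set.univ.pi t' = (s : Set ℕ).pi t := by
    ext x
    simp only [Set.mem_preimage, Set.mem_pi, Set.mem_univ, true_imp_iff, mem_coe, t']
    refine ⟨fun h i hi => by simpa [hi] using h ⟨i, mem_range.1 (hsn hi)⟩, fun h i => ?_⟩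
    split_ifs with hi
    exacts [h i hi, Set.mem_univ _]
  have hmeas : Measurable fun (x : ∀ i, X i) (i : Fin n) => x i := by fun_prop
  rw [← hpre, ← map_apply hmeas (.univ_pi fun i => by dsimp [t']; split_ifs <;> simp [ht]), hP,
    Measure.pi_pi]
  calc ∏ i : Fin n, μ i (t' i) = ∏ i ∈ range n, if i ∈ s then μ i (t i) else 1 := by
        rw [← Fin.prod_univ_eq_prod_range]
        refine prod_congr rfl fun i _ => ?_
        dsimp only [t']
        split_ifs <;> simp
    _ = ∏ i ∈ s, μ i (t i) := by rw [prod_ite_mem, inter_eq_right.2 hsn]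

theorem ae_tendsto_average_infinitePi {X : Type*} [MeasurableSpace X] (μ : Measure X)
    [IsProbabilityMeasure μ] {f : X → ℝ} (hfm : Measurable f) (hfi : Integrable f μ) :
    ∀ᵐ x ∂Measure.infinitePi fun _ : ℕ => μ,
      Tendsto (fun n : ℕ => (∑ i ∈ range n, f (x i)) / n) atTop (𝓝 (∫ a, f a ∂μ)) := by
  have hlaw (i : ℕ) := measurePreserving_eval_infinitePi (fun _ : ℕ => μ) i
  have hident (i : ℕ) :
      IdentDistrib (fun x : ℕ → X => f (x i)) (fun x : ℕ → X => f (x 0)) _ _ :=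
    IdentDistrib.comp ⟨(hlaw i).measurable.aemeasurable, (hlaw 0).measurable.aemeasurable,
      by rw [(hlaw i).map_eq, (hlaw 0).map_eq]⟩ hfm
  have hmean : ∫ x, f (x 0) ∂Measure.infinitePi (fun _ : ℕ => μ) = ∫ a, f a ∂μ := by
    rw [← integral_map (hlaw 0).measurable.aemeasurable
      (by rw [(hlaw 0).map_eq]; exact hfi.aestronglyMeasurable), (hlaw 0).map_eq]
  have hindep : iIndepFun (fun i (x : ℕ → X) => f (x i)) (Measure.infinitePi fun _ : ℕ => μ) :=
    iIndepFun_infinitePi fun _ => hfm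
  exact hmean ▸ strong_law_ae_real (fun i (x : ℕ → X) => f (x i))
    ((hlaw 0).integrable_comp_of_integrable hfi) (fun i j hij => hindep.indepFun hij) hident

-- For `n = 0` this is the zero measure, since `⊤ • 0 = 0`.
noncomputable def empiricalMeasure {X : Type*} [MeasurableSpace X] (x : ℕ → X) (n : ℕ) :
    Measure X :=
  (n : ℝ≥0∞)⁻¹ • ∑ i ∈ range n, Measure.dirac (x i)

section empiricalMeasure

variable {X : Type*} [MeasurableSpace X] (x : ℕ → X) (n : ℕ)

instance [NeZero n] : IsProbabilityMeasure (empiricalMeasure x n) :=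
  ⟨by simp [empiricalMeasure, ENNReal.inv_mul_cancel (NeZero.ne (n : ℝ≥0∞))]⟩

theorem integral_empiricalMeasure [MeasurableSingletonClass X] (f : X → ℝ) :
    ∫ a, f a ∂empiricalMeasure x n = (∑ i ∈ range n, f (x i)) / n := by
  rw [empiricalMeasure, integral_smul_measure,
    integral_finsetSum_measure fun i _ => integrable_dirac enorm_lt_top]
  simp [integral_dirac, div_eq_inv_mul]

theorem measureReal_empiricalMeasure [MeasurableSingletonClass X] {s : Set X}
    (hs : MeasurableSet s) :
    (empiricalMeasure x n).real s = (∑ i ∈ range n, s.indicator 1 (x i)) / n := by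
  rw [← integral_indicator_one hs, integral_empiricalMeasure]

end empiricalMeasure

theorem ae_tendsto_empiricalMeasure_apply {X : Type*} [MeasurableSpace X]
    [MeasurableSingletonClass X] (μ : Measure X) [IsProbabilityMeasure μ] {s : Set X}
    (hs : MeasurableSet s) :
    ∀ᵐ x ∂Measure.infinitePi fun _ : ℕ => μ,
      Tendsto (fun n => empiricalMeasure x (n + 1) s) atTop (𝓝 (μ s)) := by
  filter_upwards [ae_tendsto_average_infinitePi μ (f := s.indicator 1)
    (measurable_one.indicator hs) ((integrable_const 1).indicator hs)] with x hx
  rw [← ENNReal.tendsto_toReal_iff (fun _ => measure_ne_top _ _) (measure_ne_top _ _)]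
  simp only [← measureReal_def, measureReal_empiricalMeasure x _ hs]
  rw [integral_indicator_one hs] at hx
  exact_mod_cast (tendsto_add_atTop_iff_nat 1).2 hx

section Portmanteau

variable {Ω : Type*} [MeasurableSpace Ω]

theorem measure_iUnion_le_liminf_of_directed {ι α : Type*} [Countable ι] {L : Filter α}
    [L.NeBot]
    {μ : Measure Ω} {μs : α → Measure Ω} {U : ι → Set Ω} (hd : Directed (· ⊆ ·) U)
    (h : ∀ i, Tendsto (fun n => μs n (U i)) L (𝓝 (μ (U i)))) :
    μ (⋃ i, U i) ≤ L.liminf fun n => μs n (⋃ i, U i) := by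
  rw [hd.measure_iUnion]
  refine iSup_le fun i => ?_
  rw [← (h i).liminf_eq]
  exact liminf_le_liminf (.of_forall fun n => measure_mono (Set.subset_iUnion U i))

theorem le_liminf_of_tendsto_biUnion_countableBasis [TopologicalSpace Ω]
    [SecondCountableTopology Ω] {α : Type*} {L : Filter α} [L.NeBot] {μ : Measure Ω}
    {μs : α → Measure Ω}
    (h : ∀ t : Finset (countableBasis Ω),
      Tendsto (fun n => μs n (⋃ b ∈ t, b)) L (𝓝 (μ (⋃ b ∈ t, b))))
    {G : Set Ω} (hG : IsOpen G) :
    μ G ≤ L.liminf fun n => μs n G := by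
  classical
  let U (t : {t : Finset (countableBasis Ω) // ∀ b ∈ t, (b : Set Ω) ⊆ G}) : Set Ω :=
    ⋃ b ∈ t.1, b
  have hd : Directed (· ⊆ ·) U := fun t₁ t₂ =>
    ⟨⟨t₁.1 ∪ t₂.1, fun b hb => (mem_union.1 hb).elim (t₁.2 b) (t₂.2 b)⟩,
      Set.biUnion_subset_biUnion_left (by simp), Set.biUnion_subset_biUnion_left (by simp)⟩
  have hU : ⋃ t, U t = G := by
    refine (Set.iUnion_subset fun t => Set.iUnion₂_subset t.2).antisymm fun y hy => ?_
    obtain ⟨b, hb, hyb, hbG⟩ := (isBasis_countableBasis Ω).exists_subset_of_mem_open hy hG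
    exact Set.mem_iUnion.2 ⟨⟨{⟨b, hb⟩}, by simpa using hbG⟩, by simpa [U] using hyb⟩
  exact hU ▸ measure_iUnion_le_liminf_of_directed hd fun t => h t.1

theorem tendsto_integral_of_forall_isOpen_le_liminf_measure [TopologicalSpace Ω]
    [OpensMeasurableSpace Ω] {μ : Measure Ω} [IsProbabilityMeasure μ] {μs : ℕ → Measure Ω}
    [∀ n, IsProbabilityMeasure (μs n)]
    (h : ∀ G, IsOpen G → μ G ≤ atTop.liminf fun n => μs n G) (f : Ω →ᵇ ℝ) :
    Tendsto (fun n => ∫ x, f x ∂μs n) atTop (𝓝 (∫ x, f x ∂μ)) :=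
  BoundedContinuousFunction.tendsto_integral_of_forall_integral_le_liminf_integral
    (fun _ hg => integral_le_liminf_integral_of_forall_isOpen_measure_le_liminf_measure hg h) f

end Portmanteau

end MeasureTheory

theorem generic_full_measure_general
    {X : Type*} [MetricSpace X] [TopologicalSpace.SeparableSpace X]
    [MeasurableSpace X] [BorelSpace X]
    (μ : Measure X) [IsProbabilityMeasure μ]
    (P : Measure (ℕ → X))
    (hP : ∀ n : ℕ, P.map (fun x (i : Fin n) => x i) = Measure.pi (fun _ : Fin n => μ)) :
    P {x : ℕ → X | Generic μ x} = 1 := by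
  obtain rfl := Measure.eq_infinitePi_of_map_fin (fun _ => μ) hP
  have hbasis (t : Finset (countableBasis X)) : MeasurableSet (⋃ b ∈ t, (b : Set X)) :=
    .biUnion t.countable_toSet fun b _ => ((isBasis_countableBasis X).isOpen b.2).measurableSet
  have hgeneric : ∀ᵐ x ∂Measure.infinitePi fun _ : ℕ => μ, Generic μ x := by
    filter_upwards [ae_all_iff.2 fun t => ae_tendsto_empiricalMeasure_apply μ (hbasis t)]
      with x hx φ
    have := tendsto_integral_of_forall_isOpen_le_liminf_measure
      (fun _ hG => le_liminf_of_tendsto_biUnion_countableBasis hx hG) φ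
    simp only [integral_empiricalMeasure] at this
    exact (tendsto_add_atTop_iff_nat 1).1 (by exact_mod_cast this)
  exact (measure_congr (ae_eq_univ.2 hgeneric)).trans measure_univ

/-- Let `X` be a separable metric space and `μ` a Borel probability measure
on `X`. Then the set of sequences generic for `μ` has full measure under the countable product
measure `μ^⊗ℕ` on `ℕ → X`; here the product measure is characterized as the (unique) probability
measure on `ℕ → X` whose finite-dimensional marginals are the finite product measures. -/
theorem generic_full_measure
    {X : Type*} [MetricSpace X] [TopologicalSpace.SeparableSpace X]
    [MeasurableSpace X] [BorelSpace X]
    (μ : Measure X) [IsProbabilityMeasure μ]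
    (P : Measure (ℕ → X)) [IsProbabilityMeasure P]
    (hP : ∀ n : ℕ, P.map (fun x (i : Fin n) => x i) = Measure.pi (fun _ : Fin n => μ)) :
    P {x : ℕ → X | Generic μ x} = 1 :=
  generic_full_measure_general μ P hP
end

section
/- Let X, X' and Y be Polish spaces, μ and μ' Borel probability measures on X and X' respectively, and T : X → Y, T' : X' → Y Borel measurable maps with T_♯ μ = T'_♯ μ'. If A ⊂ X and A' ⊂ X' are Borel sets with μ[A] = 1 and μ'[A'] = 1, then the images intersect: T(A) ∩ T'(A') ≠ ∅. -/
open MeasureTheory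

/-- Let `X`, `X'` and `Y` be Polish spaces, `μ`, `μ'` Borel probability
measures on `X`, `X'` respectively, and `T : X → Y`, `T' : X' → Y` Borel measurable maps with
`T_♯ μ = T'_♯ μ'`. If `A ⊆ X` and `A' ⊆ X'` are Borel sets of full measure, then the images
intersect: `T(A) ∩ T'(A') ≠ ∅`. -/
theorem images_of_full_measure_sets_intersect
    {X X' Y : Type*}
    [TopologicalSpace X] [PolishSpace X] [MeasurableSpace X] [BorelSpace X]
    [TopologicalSpace X'] [PolishSpace X'] [MeasurableSpace X'] [BorelSpace X']
    [TopologicalSpace Y] [PolishSpace Y] [MeasurableSpace Y] [BorelSpace Y]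
    (μ : Measure X) [IsProbabilityMeasure μ] (μ' : Measure X') [IsProbabilityMeasure μ']
    (T : X → Y) (hT : Measurable T) (T' : X' → Y) (hT' : Measurable T')
    (hTT' : μ.map T = μ'.map T')
    (A : Set X) (hA : MeasurableSet A) (hA1 : μ A = 1)
    (A' : Set X') (hA' : MeasurableSet A') (hA'1 : μ' A' = 1) :
    (T '' A ∩ T' '' A').Nonempty := by
  by_contra h
  rw [Set.not_nonempty_iff_eq_empty, ← Set.disjoint_iff_inter_eq_empty] at h
  -- Lusin separation: the two analytic images are contained in disjoint Borel sets
  obtain ⟨u, hsu, hdisj, hu⟩ :=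
    (hA.analyticSet_image hT).measurablySeparable (hA'.analyticSet_image hT') h
  -- ν(u) = 1 since A ⊆ T⁻¹ u
  have h1 : (μ.map T) u = 1 := by
    rw [Measure.map_apply hT hu]
    refine le_antisymm prob_le_one ?_
    rw [← hA1]
    exact measure_mono fun x hx => hsu ⟨x, hx, rfl⟩
  -- ν(uᶜ) = 1 since A' ⊆ T'⁻¹ uᶜ
  have h2 : (μ.map T) uᶜ = 1 := by
    rw [hTT', Measure.map_apply hT' hu.compl]
    refine le_antisymm prob_le_one ?_
    rw [← hA'1]
    refine measure_mono fun x hx => ?_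
    exact (Set.disjoint_left.mp hdisj ⟨x, hx, rfl⟩ : _)
  have : (μ.map T) Set.univ = 2 := by
    have := measure_add_measure_compl (μ := μ.map T) hu
    rw [h1, h2] at this
    rw [← this]; norm_num
  have hprob : IsProbabilityMeasure (μ.map T) := Measure.isProbabilityMeasure_map hT.aemeasurable
  rw [measure_univ] at this
  norm_num at this
end
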